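/- arXiv:1706.04677 — 3 statements merged into one kernel-verified Lean document; each statement's English description precedes it below -/
import Mathlib

section
/- Let ((X, X̃), (Z, Z̃)) be random vectors with values in (𝒳^p × 𝒳^p) × (K^p × K^p) (𝒳 and K finite, p ≥ 1) whose joint probability mass function factorizes as P(X=x, X̃=x̃, Z=z, Z̃=z̃) = r(z, z̃) · ∏_{j=1}^p f_j(x_j | z_j) · ∏_{j=1}^p f_j(x̃_j | z̃_j), where r is the joint pmf of (Z, Z̃) and each f_j(· | k) is a probability mass function on 𝒳. Assume that for every subset S ⊆ {1,…,p} the pair exchangeability r((z, z̃)_swap(S)) = r(z, z̃) holds for all z, z̃ ∈ K^p. Then for every subset S ⊆ {1,…,p} and all x, x̃ ∈ 𝒳^p, z, z̃ ∈ K^p, one has P((X, X̃) = (x, x̃)_swap(S), (Z, Z̃) = (z, z̃)_swap(S)) = P((X, X̃) = (x, x̃), (Z, Z̃) = (z, z̃)); that is, ((X, X̃)_swap(S), (Z, Z̃)_swap(S)) has the same distribution as ((X, X̃), (Z, Z̃)). -/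
open Finset

theorem Finset.prod_mul_prod_ite_swap {ι α β M : Type*} [Fintype ι] [DecidableEq ι]
    [CommMonoid M] (S : Finset ι) (g : ι → α → β → M) (x xt : ι → α) (z zt : ι → β) :
    (∏ j, g j (if j ∈ S then xt j else x j) (if j ∈ S then zt j else z j)) *
        ∏ j, g j (if j ∈ S then x j else xt j) (if j ∈ S then z j else zt j)
      = (∏ j, g j (x j) (z j)) * ∏ j, g j (xt j) (zt j) := by
  rw [← prod_mul_distrib, ← prod_mul_distrib]
  refine prod_congr rfl fun j _ => ?_
  split_ifs
  · exact mul_comm _ _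
  · rfl

theorem hmm_knockoff_joint_swap_invariance_general
    {𝒳 K : Type*}
    (p : ℕ)
    (r : (Fin p → K) → (Fin p → K) → ℝ)
    (hr_swap : ∀ (S : Finset (Fin p)) (z zt : Fin p → K),
      r (fun j => if j ∈ S then zt j else z j) (fun j => if j ∈ S then z j else zt j)
        = r z zt)
    (f : Fin p → 𝒳 → K → ℝ)
    (μ : (Fin p → 𝒳) → (Fin p → 𝒳) → (Fin p → K) → (Fin p → K) → ℝ)
    (hμ : ∀ x xt z zt, μ x xt z zt =
      r z zt * (∏ j : Fin p, f j (x j) (z j)) * ∏ j : Fin p, f j (xt j) (zt j)) :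
    ∀ (S : Finset (Fin p)) (x xt : Fin p → 𝒳) (z zt : Fin p → K),
      μ (fun j => if j ∈ S then xt j else x j) (fun j => if j ∈ S then x j else xt j)
        (fun j => if j ∈ S then zt j else z j) (fun j => if j ∈ S then z j else zt j)
        = μ x xt z zt := by
  intro S x xt z zt
  rw [hμ, hμ, hr_swap, mul_assoc, mul_assoc, prod_mul_prod_ite_swap]

/-- **Theorem (Knockoff copies of an HMM), joint swap invariance.**
If the joint pmf of `((X, Xt), (Z, Z̃))` factorizes as
`μ x xt z zt = r z zt * ∏ j f j (x j) (z j) * ∏ j f j (xt j) (zt j)`,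
where `r` (the joint pmf of `(Z, Z̃)`) is invariant under coordinate swaps
`(z, zt)_swap(S)` for every `S`, and each `f j (· | k)` is a pmf, then for every
`S ⊆ {1,…,p}` the joint law is invariant under simultaneously swapping the
coordinates in `S` of `(X, Xt)` and of `(Z, Z̃)`. -/
theorem hmm_knockoff_joint_swap_invariance
    {𝒳 K : Type*} [Fintype 𝒳] [Fintype K]
    (p : ℕ) (hp : 1 ≤ p)
    (r : (Fin p → K) → (Fin p → K) → ℝ)
    (hr_nonneg : ∀ z zt, 0 ≤ r z zt)
    (hr_sum : ∑ z : Fin p → K, ∑ zt : Fin p → K, r z zt = 1)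
    (hr_swap : ∀ (S : Finset (Fin p)) (z zt : Fin p → K),
      r (fun j => if j ∈ S then zt j else z j) (fun j => if j ∈ S then z j else zt j)
        = r z zt)
    (f : Fin p → 𝒳 → K → ℝ)
    (hf_nonneg : ∀ j a k, 0 ≤ f j a k)
    (hf_sum : ∀ j k, ∑ a : 𝒳, f j a k = 1)
    (μ : (Fin p → 𝒳) → (Fin p → 𝒳) → (Fin p → K) → (Fin p → K) → ℝ)
    (hμ : ∀ x xt z zt, μ x xt z zt =
      r z zt * (∏ j : Fin p, f j (x j) (z j)) * ∏ j : Fin p, f j (xt j) (zt j)) :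
    ∀ (S : Finset (Fin p)) (x xt : Fin p → 𝒳) (z zt : Fin p → K),
      μ (fun j => if j ∈ S then xt j else x j) (fun j => if j ∈ S then x j else xt j)
        (fun j => if j ∈ S then zt j else z j) (fun j => if j ∈ S then z j else zt j)
        = μ x xt z zt :=
  hmm_knockoff_joint_swap_invariance_general p r hr_swap f μ hμ
end

section
/- Let ((X, X̃), (Z, Z̃)) be random vectors with values in (𝒳^p × 𝒳^p) × (K^p × K^p) (𝒳 and K finite, p ≥ 1) whose joint probability mass function factorizes as P(X=x, X̃=x̃, Z=z, Z̃=z̃) = r(z, z̃) · ∏_{j=1}^p f_j(x_j | z_j) · ∏_{j=1}^p f_j(x̃_j | z̃_j), where r is the joint pmf of (Z, Z̃) satisfying r((z, z̃)_swap(S)) = r(z, z̃) for every S ⊆ {1,…,p} and all z, z̃, and each f_j(· | k) is a probability mass function on 𝒳. Then X̃ is a knockoff copy of X: for every subset S ⊆ {1,…,p} and all x, x̃ ∈ 𝒳^p, P((X, X̃) = (x, x̃)_swap(S)) = P((X, X̃) = (x, x̃)). -/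
/-- **Corollary (Xt is a knockoff copy of X).**
Under the factorized HMM-knockoff joint law, marginalizing over the latent
variables `(Z, Z̃)` shows that the law of `(X, Xt)` is invariant under swapping
the coordinates in any subset `S`. -/
theorem hmm_knockoff_marginal_swap_invariance
    {𝒳 K : Type*} [Fintype 𝒳] [Fintype K]
    (p : ℕ) (hp : 1 ≤ p)
    (r : (Fin p → K) → (Fin p → K) → ℝ)
    (hr_nonneg : ∀ z zt, 0 ≤ r z zt)
    (hr_sum : ∑ z : Fin p → K, ∑ zt : Fin p → K, r z zt = 1)
    (hr_swap : ∀ (S : Finset (Fin p)) (z zt : Fin p → K),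
      r (fun j => if j ∈ S then zt j else z j) (fun j => if j ∈ S then z j else zt j)
        = r z zt)
    (f : Fin p → 𝒳 → K → ℝ)
    (hf_nonneg : ∀ j a k, 0 ≤ f j a k)
    (hf_sum : ∀ j k, ∑ a : 𝒳, f j a k = 1)
    (μ : (Fin p → 𝒳) → (Fin p → 𝒳) → (Fin p → K) → (Fin p → K) → ℝ)
    (hμ : ∀ x xt z zt, μ x xt z zt =
      r z zt * (∏ j : Fin p, f j (x j) (z j)) * ∏ j : Fin p, f j (xt j) (zt j)) :
    ∀ (S : Finset (Fin p)) (x xt : Fin p → 𝒳),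
      (∑ z : Fin p → K, ∑ zt : Fin p → K,
        μ (fun j => if j ∈ S then xt j else x j) (fun j => if j ∈ S then x j else xt j) z zt)
      = ∑ z : Fin p → K, ∑ zt : Fin p → K, μ x xt z zt := by
  intro S x xt
  have h1 : ∀ (u v : Fin p → 𝒳),
      (∑ z : Fin p → K, ∑ zt : Fin p → K, μ u v z zt)
      = ∑ zz : (Fin p → K) × (Fin p → K), μ u v zz.1 zz.2 := fun u v =>
    (Fintype.sum_prod_type (f := fun zz => μ u v zz.1 zz.2)).symm
  rw [h1, h1]
  refine Fintype.sum_equiv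
    ⟨fun zz => (fun j => if j ∈ S then zz.2 j else zz.1 j,
                fun j => if j ∈ S then zz.1 j else zz.2 j),
     fun zz => (fun j => if j ∈ S then zz.2 j else zz.1 j,
                fun j => if j ∈ S then zz.1 j else zz.2 j),
     ?_, ?_⟩ _ _ ?_
  · intro zz
    ext j <;> by_cases h : j ∈ S <;> simp [h]
  · intro zz
    ext j <;> by_cases h : j ∈ S <;> simp [h]
  · rintro ⟨z, zt⟩
    simp only [hμ, Equiv.coe_fn_mk]
    rw [hr_swap, mul_assoc, mul_assoc]
    congr 1
    rw [← Finset.prod_mul_distrib, ← Finset.prod_mul_distrib]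
    refine Finset.prod_congr rfl fun j _ => ?_
    by_cases h : j ∈ S <;> simp [h, mul_comm]
end

section
/- Let (Z, X) be distributed as a discrete hidden Markov model on K^p × 𝒳^p (K, 𝒳 finite, p ≥ 1): P(Z = z, X = x) = q_1(z_1) · ∏_{j=2}^p Q_j(z_j | z_{j-1}) · ∏_{j=1}^p f_j(x_j | z_j). Fix x ∈ 𝒳^p with P(X = x) > 0 and define α_j(k) = P(X_1 = x_1, …, X_j = x_j, Z_j = k). Then for every z ∈ K^p, the conditional distribution of the full latent path factorizes as P(Z = z | X = x) = [α_p(z_p) / Σ_{k ∈ K} α_p(k)] · ∏_{j=1}^{p−1} [Q_{j+1}(z_{j+1} | z_j) · α_j(z_j) / Σ_{k ∈ K} Q_{j+1}(z_{j+1} | k) · α_j(k)] (with the convention that any factor whose denominator is zero does not occur, since in that case both sides equal zero); consequently, the forward-backward sampling algorithm, which samples z_p from α_p(·)/Σ_k α_p(k) and then, for j = p−1 down to 1, samples z_j from Q_{j+1}(z_{j+1} | ·) α_j(·) / Σ_k Q_{j+1}(z_{j+1} | k) α_j(k), produces an exact sample from the conditional distribution of Z given X = x. -/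
/-!
Summing the joint law over everything after time `j` (latent states and observations) only
uses that the transition and emission kernels are stochastic, so the filtering marginals
`α j k = P(X_{≤ j} = x_{≤ j}, Z_j = k)` obey the forward recursion
`α 0 k = q₁ k f₀(x₀ | k)`, `α (j+1) m = f_{j+1}(x_{j+1} | m) ∑ k, Q_{j+1}(m | k) α j k`,
and `∑ k, α_{last} k = P(X = x)`. By this recursion, multiplying `P(Z = z, X = x)` by all the
denominators `∑ k, Q_{j+1}(z_{j+1} | k) α j k` telescopes into
`α_{last}(z_{last}) ∏ j, Q_{j+1}(z_{j+1} | z_j) α j (z_j)`. If some denominator vanishes, then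
`Q_{j+1}(z_{j+1} | z_j) α j (z_j) = 0`, and `P(Z = z, X = x) = 0` because it is at most
`α j (z_j)`.
-/

open Finset

theorem Fin.sum_univ_pi_snoc {α M : Type*} [Fintype α] [AddCommMonoid M] {n : ℕ}
    (g : (Fin (n + 1) → α) → M) :
    ∑ z, g z = ∑ z : Fin n → α, ∑ a, g (Fin.snoc z a) := by
  rw [← (Fin.snocEquiv fun _ => α).sum_comp, Fintype.sum_prod_type, Finset.sum_comm]
  rfl

namespace HiddenMarkov

variable {K 𝒳 : Type*} (q1 : K → ℝ) (Q : ℕ → K → K → ℝ) (f : ℕ → 𝒳 → K → ℝ)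

/-- Time runs over `0, …, n`. The kernels are indexed by `ℕ`, so that one family
`(q1, Q, f)` defines the model on every horizon and `joint (n + 1)` marginalizes to `joint n`. -/
def joint (n : ℕ) (z : Fin (n + 1) → K) (x : Fin (n + 1) → 𝒳) : ℝ :=
  q1 (z 0) * (∏ i : Fin n, Q i.succ (z i.succ) (z i.castSucc)) *
    ∏ j : Fin (n + 1), f j (x j) (z j)

def forward [Fintype K] (x : ℕ → 𝒳) : ℕ → K → ℝ
  | 0, k => q1 k * f 0 (x 0) k
  | j + 1, m => f (j + 1) (x (j + 1)) m * ∑ k, Q (j + 1) m k * forward x j k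

def forwardMarginal [Fintype K] [Fintype 𝒳] [DecidableEq K] [DecidableEq 𝒳]
    (n : ℕ) (x : ℕ → 𝒳) (j : Fin (n + 1)) (k : K) : ℝ :=
  ∑ z : Fin (n + 1) → K, ∑ x' : Fin (n + 1) → 𝒳,
    if z j = k ∧ ∀ i ≤ j, x' i = x i then joint q1 Q f n z x' else 0

theorem joint_snoc {n : ℕ} (z : Fin (n + 1) → K) (a : K) (x : Fin (n + 1) → 𝒳) (b : 𝒳) :
    joint q1 Q f (n + 1) (Fin.snoc z a) (Fin.snoc x b)
      = joint q1 Q f n z x * (Q (n + 1) a (z (Fin.last n)) * f (n + 1) b a) := by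
  unfold joint
  rw [Fin.prod_univ_castSucc, Fin.prod_univ_castSucc, ← Fin.castSucc_zero]
  simp only [Fin.succ_castSucc, Fin.snoc_castSucc, Fin.succ_last, Fin.snoc_last, Fin.val_last,
    Fin.val_castSucc]
  ring

theorem joint_zero (z : Fin 1 → K) (x : Fin 1 → 𝒳) :
    joint q1 Q f 0 z x = q1 (z 0) * f 0 (x 0) (z 0) := by
  simp [joint]

theorem joint_mul_prod_sum_eq [Fintype K] {n : ℕ} (x : ℕ → 𝒳) (z : Fin (n + 1) → K) :
    joint q1 Q f n z (fun i => x i) *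
        ∏ i : Fin n, ∑ k, Q i.succ (z i.succ) k * forward q1 Q f x i k
      = forward q1 Q f x n (z (Fin.last n)) *
          ∏ i : Fin n, Q i.succ (z i.succ) (z i.castSucc) * forward q1 Q f x i (z i.castSucc) := by
  have hforward : ∏ j : Fin (n + 1), forward q1 Q f x j (z j)
      = (∏ i : Fin n, forward q1 Q f x i (z i.castSucc)) * forward q1 Q f x n (z (Fin.last n)) := by
    simp [Fin.prod_univ_castSucc]
  calc _ = (∏ i : Fin n, Q i.succ (z i.succ) (z i.castSucc)) *
        ∏ j : Fin (n + 1), forward q1 Q f x j (z j) := by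
        rw [joint, Fin.prod_univ_succ (n := n), Fin.prod_univ_succ (n := n)]
        simp only [forward, Fin.val_succ, Fin.val_zero, Finset.prod_mul_distrib]
        ring
    _ = _ := by
        rw [hforward, Finset.prod_mul_distrib]
        ring

section Marginal

variable [Fintype K] [Fintype 𝒳]

theorem sum_sum_joint_snoc (hQ_sum : ∀ j l, ∑ k, Q j k l = 1)
    (hf_sum : ∀ j k, ∑ a, f j a k = 1) {n : ℕ} (z : Fin (n + 1) → K) (x : Fin (n + 1) → 𝒳) :
    ∑ a, ∑ b, joint q1 Q f (n + 1) (Fin.snoc z a) (Fin.snoc x b) = joint q1 Q f n z x := by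
  simp only [joint_snoc, ← Finset.mul_sum, hf_sum, mul_one, hQ_sum]

variable [DecidableEq K] [DecidableEq 𝒳]

theorem forwardMarginal_last (n : ℕ) (x : ℕ → 𝒳) (k : K) :
    forwardMarginal q1 Q f n x (Fin.last n) k
      = ∑ z, if z (Fin.last n) = k then joint q1 Q f n z (fun i : Fin (n + 1) => x i) else 0 := by
  have hobs (x' : Fin (n + 1) → 𝒳) :
      (∀ i ≤ Fin.last n, x' i = x i) ↔ x' = fun i : Fin (n + 1) => x i := by
    simp [Fin.le_last, funext_iff]
  refine Finset.sum_congr rfl fun z _ => ?_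
  simp only [hobs]
  split_ifs with hz <;> simp [hz]

theorem forwardMarginal_castSucc (hQ_sum : ∀ j l, ∑ k, Q j k l = 1)
    (hf_sum : ∀ j k, ∑ a, f j a k = 1) {n : ℕ} (x : ℕ → 𝒳) (j : Fin (n + 1)) (k : K) :
    forwardMarginal q1 Q f (n + 1) x j.castSucc k = forwardMarginal q1 Q f n x j k := by
  have hobs (x' : Fin (n + 1) → 𝒳) (b : 𝒳) :
      (∀ i ≤ j.castSucc, (Fin.snoc x' b : Fin (n + 2) → 𝒳) i = x i) ↔ ∀ i ≤ j, x' i = x i := by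
    simp [Fin.forall_fin_succ', Fin.snoc_castSucc]
  unfold forwardMarginal
  rw [Fin.sum_univ_pi_snoc]
  refine Finset.sum_congr rfl fun z _ => ?_
  simp only [Fin.sum_univ_pi_snoc (n := n + 1) (α := 𝒳), Fin.snoc_castSucc, hobs]
  rw [Finset.sum_comm]
  refine Finset.sum_congr rfl fun x' _ => ?_
  by_cases hC : z j = k ∧ ∀ i ≤ j, x' i = x i
  · simp only [if_pos hC, sum_sum_joint_snoc q1 Q f hQ_sum hf_sum]
  · simp only [if_neg hC, Finset.sum_const_zero]

theorem forwardMarginal_last_succ {n : ℕ} (x : ℕ → 𝒳) (m : K) :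
    forwardMarginal q1 Q f (n + 1) x (Fin.last (n + 1)) m
      = f (n + 1) (x (n + 1)) m *
          ∑ k, Q (n + 1) m k * forwardMarginal q1 Q f n x (Fin.last n) k := by
  have hobs : (fun i : Fin (n + 2) => x i) = Fin.snoc (fun i : Fin (n + 1) => x i) (x (n + 1)) := by
    ext i
    induction i using Fin.lastCases <;> simp
  simp only [forwardMarginal_last]
  rw [Fin.sum_univ_pi_snoc, hobs]
  simp only [Fin.snoc_last, joint_snoc, Finset.mul_sum, mul_ite, mul_zero]
  conv_rhs => rw [Finset.sum_comm]
  simp only [Finset.sum_ite_eq', Finset.sum_ite_eq, Finset.mem_univ, if_true]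
  refine Finset.sum_congr rfl fun z _ => ?_
  ring

theorem forwardMarginal_zero (x : ℕ → 𝒳) (k : K) :
    forwardMarginal q1 Q f 0 x 0 k = q1 k * f 0 (x 0) k := by
  rw [← Fin.last_zero, forwardMarginal_last, Fin.sum_univ_pi_snoc, Fintype.sum_unique]
  simp [joint_zero, Fin.snoc_zero]

theorem forwardMarginal_eq_forward (hQ_sum : ∀ j l, ∑ k, Q j k l = 1)
    (hf_sum : ∀ j k, ∑ a, f j a k = 1) (x : ℕ → 𝒳) :
    ∀ (n : ℕ) (j : Fin (n + 1)) (k : K), forwardMarginal q1 Q f n x j k = forward q1 Q f x j k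
  | 0, j, k => by rw [Fin.fin_one_eq_zero j, forwardMarginal_zero]; rfl
  | n + 1, j, k => by
    induction j using Fin.lastCases with
    | last =>
      rw [forwardMarginal_last_succ]
      simp only [forwardMarginal_eq_forward hQ_sum hf_sum x n, Fin.val_last]
      rfl
    | cast j =>
      rw [forwardMarginal_castSucc q1 Q f hQ_sum hf_sum, forwardMarginal_eq_forward hQ_sum hf_sum x n,
        Fin.val_castSucc]

end Marginal

theorem sum_forward_eq_sum_joint [Fintype K] [Fintype 𝒳] (hQ_sum : ∀ j l, ∑ k, Q j k l = 1)
    (hf_sum : ∀ j k, ∑ a, f j a k = 1) (x : ℕ → 𝒳) (n : ℕ) :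
    ∑ k, forward q1 Q f x n k = ∑ z, joint q1 Q f n z (fun i : Fin (n + 1) => x i) := by
  classical
  have hlast (k : K) : forward q1 Q f x n k = forwardMarginal q1 Q f n x (Fin.last n) k := by
    rw [forwardMarginal_eq_forward q1 Q f hQ_sum hf_sum, Fin.val_last]
  simp only [hlast, forwardMarginal_last]
  rw [Finset.sum_comm]
  simp only [Finset.sum_ite_eq, Finset.mem_univ, if_true]

variable {q1 Q f}

theorem joint_nonneg (hq1 : ∀ k, 0 ≤ q1 k) (hQ : ∀ j k l, 0 ≤ Q j k l)
    (hf : ∀ j a k, 0 ≤ f j a k) {n : ℕ} (z : Fin (n + 1) → K) (x : Fin (n + 1) → 𝒳) :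
    0 ≤ joint q1 Q f n z x :=
  mul_nonneg (mul_nonneg (hq1 _) (Finset.prod_nonneg fun _ _ => hQ _ _ _))
    (Finset.prod_nonneg fun _ _ => hf _ _ _)

theorem forward_nonneg [Fintype K] (hq1 : ∀ k, 0 ≤ q1 k) (hQ : ∀ j k l, 0 ≤ Q j k l)
    (hf : ∀ j a k, 0 ≤ f j a k) (x : ℕ → 𝒳) : ∀ j k, 0 ≤ forward q1 Q f x j k
  | 0, k => mul_nonneg (hq1 k) (hf 0 (x 0) k)
  | j + 1, m => mul_nonneg (hf _ _ m) <|
      Finset.sum_nonneg fun k _ => mul_nonneg (hQ _ m k) (forward_nonneg hq1 hQ hf x j k)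

variable [Fintype K] [Fintype 𝒳]

theorem joint_le_forward (hq1 : ∀ k, 0 ≤ q1 k) (hQ : ∀ j k l, 0 ≤ Q j k l)
    (hf : ∀ j a k, 0 ≤ f j a k) (hQ_sum : ∀ j l, ∑ k, Q j k l = 1)
    (hf_sum : ∀ j k, ∑ a, f j a k = 1) {n : ℕ} (x : ℕ → 𝒳) (z : Fin (n + 1) → K)
    (j : Fin (n + 1)) :
    joint q1 Q f n z (fun i => x i) ≤ forward q1 Q f x j (z j) := by
  classical
  rw [← forwardMarginal_eq_forward q1 Q f hQ_sum hf_sum]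
  have hterm (z' : Fin (n + 1) → K) (x' : Fin (n + 1) → 𝒳) :
      0 ≤ if z' j = z j ∧ ∀ i ≤ j, x' i = x i then joint q1 Q f n z' x' else 0 := by
    split_ifs
    exacts [joint_nonneg hq1 hQ hf z' x', le_rfl]
  calc joint q1 Q f n z (fun i => x i)
      = if z j = z j ∧ ∀ i ≤ j, x i = x i then joint q1 Q f n z (fun i => x i) else 0 := by simp
    _ ≤ ∑ x' : Fin (n + 1) → 𝒳,
          if z j = z j ∧ ∀ i ≤ j, x' i = x i then joint q1 Q f n z x' else 0 :=
      Finset.single_le_sum (fun x' _ => hterm z x') (Finset.mem_univ _)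
    _ ≤ forwardMarginal q1 Q f n x j (z j) :=
      Finset.single_le_sum (f := fun z' => ∑ x' : Fin (n + 1) → 𝒳, _)
        (fun z' _ => Finset.sum_nonneg fun x' _ => hterm z' x') (Finset.mem_univ z)

theorem joint_eq_zero_of_sum_eq_zero (hq1 : ∀ k, 0 ≤ q1 k) (hQ : ∀ j k l, 0 ≤ Q j k l)
    (hf : ∀ j a k, 0 ≤ f j a k) (hQ_sum : ∀ j l, ∑ k, Q j k l = 1)
    (hf_sum : ∀ j k, ∑ a, f j a k = 1) {n : ℕ} (x : ℕ → 𝒳) (z : Fin (n + 1) → K) (i : Fin n)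
    (h : ∑ k, Q i.succ (z i.succ) k * forward q1 Q f x i k = 0) :
    joint q1 Q f n z (fun i => x i) = 0 := by
  have hterm := (Finset.sum_eq_zero_iff_of_nonneg fun k _ =>
    mul_nonneg (hQ _ _ k) (forward_nonneg hq1 hQ hf x i k)).1 h (z i.castSucc) (Finset.mem_univ _)
  rcases mul_eq_zero.1 hterm with hQ0 | hforward0
  · rw [joint, Finset.prod_eq_zero (Finset.mem_univ i) hQ0, mul_zero, zero_mul]
  · refine le_antisymm ?_ (joint_nonneg hq1 hQ hf z _)
    simpa [hforward0] using joint_le_forward hq1 hQ hf hQ_sum hf_sum x z i.castSucc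

theorem joint_div_sum_joint (hq1 : ∀ k, 0 ≤ q1 k) (hQ : ∀ j k l, 0 ≤ Q j k l)
    (hf : ∀ j a k, 0 ≤ f j a k) (hQ_sum : ∀ j l, ∑ k, Q j k l = 1)
    (hf_sum : ∀ j k, ∑ a, f j a k = 1) {n : ℕ} (x : ℕ → 𝒳) (z : Fin (n + 1) → K) :
    joint q1 Q f n z (fun i => x i) / ∑ z', joint q1 Q f n z' (fun i => x i)
      = (forward q1 Q f x n (z (Fin.last n)) / ∑ k, forward q1 Q f x n k) *
          ∏ i : Fin n, Q i.succ (z i.succ) (z i.castSucc) * forward q1 Q f x i (z i.castSucc) /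
            ∑ k, Q i.succ (z i.succ) k * forward q1 Q f x i k := by
  rw [sum_forward_eq_sum_joint q1 Q f hQ_sum hf_sum]
  by_cases hD : ∃ i : Fin n, ∑ k, Q i.succ (z i.succ) k * forward q1 Q f x i k = 0
  · obtain ⟨i, hi⟩ := hD
    rw [joint_eq_zero_of_sum_eq_zero hq1 hQ hf hQ_sum hf_sum x z i hi, zero_div,
      Finset.prod_eq_zero (Finset.mem_univ i) (by rw [hi, div_zero]), mul_zero]
  · push Not at hD
    rw [Finset.prod_div_distrib, div_mul_div_comm, ← joint_mul_prod_sum_eq,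
      mul_div_mul_right _ _ (Finset.prod_ne_zero_iff.2 fun i _ => hD i)]

end HiddenMarkov

open HiddenMarkov in
/-- **Correctness of forward-backward sampling.**
For a discrete hidden Markov model with `P(X = x) > 0`, the conditional
distribution of the full latent path factorizes as
`P(Z = z | X = x) = [α_p(z_p) / ∑ k, α_p(k)]
  * ∏_{j=1}^{p-1} [Q_{j+1}(z_{j+1} | z_j) α_j(z_j) / ∑ k, Q_{j+1}(z_{j+1} | k) α_j(k)]`,
where `α_j(k) = P(X_{1:j} = x_{1:j}, Z_j = k)` (division by zero is interpreted
as zero, in which case both sides vanish).  Consequently, the forward-backward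
sampling algorithm produces an exact sample from the conditional law of `Z`
given `X = x`. -/
theorem hmm_forward_backward_sampling_correct
    {K 𝒳 : Type*} [Fintype K] [Fintype 𝒳] [DecidableEq K] [DecidableEq 𝒳]
    (p : ℕ) (hp : 1 ≤ p)
    (q1 : K → ℝ) (Q : Fin p → K → K → ℝ) (f : Fin p → 𝒳 → K → ℝ)
    (hq1_nonneg : ∀ k, 0 ≤ q1 k)
    (hQ_nonneg : ∀ j k l, 0 ≤ Q j k l) (hQ_sum : ∀ j l, ∑ k : K, Q j k l = 1)
    (hf_nonneg : ∀ j a k, 0 ≤ f j a k) (hf_sum : ∀ j k, ∑ a : 𝒳, f j a k = 1)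
    (μ : (Fin p → K) → (Fin p → 𝒳) → ℝ)
    (hμ : ∀ z x, μ z x =
      q1 (z ⟨0, by omega⟩) *
      (∏ i : Fin (p - 1),
        Q ⟨i.val + 1, by have := i.isLt; omega⟩
          (z ⟨i.val + 1, by have := i.isLt; omega⟩)
          (z ⟨i.val, by have := i.isLt; omega⟩)) *
      ∏ j : Fin p, f j (x j) (z j))
    (x : Fin p → 𝒳)
    (α : Fin p → K → ℝ)
    (hα : ∀ (j : Fin p) (k : K), α j k =
      ∑ z : Fin p → K, ∑ x' : Fin p → 𝒳,
        if z j = k ∧ (∀ i : Fin p, i ≤ j → x' i = x i) then μ z x' else 0) :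
    ∀ z : Fin p → K,
      -- `P(Z = z | X = x)`
      μ z x / (∑ z' : Fin p → K, μ z' x)
      = (α ⟨p - 1, by omega⟩ (z ⟨p - 1, by omega⟩) /
            ∑ k : K, α ⟨p - 1, by omega⟩ k) *
        ∏ i : Fin (p - 1),
          (Q ⟨i.val + 1, by have := i.isLt; omega⟩
              (z ⟨i.val + 1, by have := i.isLt; omega⟩)
              (z ⟨i.val, by have := i.isLt; omega⟩) *
            α ⟨i.val, by have := i.isLt; omega⟩ (z ⟨i.val, by have := i.isLt; omega⟩)) /
          (∑ k : K,
            Q ⟨i.val + 1, by have := i.isLt; omega⟩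
                (z ⟨i.val + 1, by have := i.isLt; omega⟩) k *
              α ⟨i.val, by have := i.isLt; omega⟩ k) := by
  obtain ⟨n, rfl⟩ : ∃ n, p = n + 1 := ⟨p - 1, by omega⟩
  intro z
  let Q' : ℕ → K → K → ℝ := fun j => Q (Fin.ofNat (n + 1) j)
  let f' : ℕ → 𝒳 → K → ℝ := fun j => f (Fin.ofNat (n + 1) j)
  let x' : ℕ → 𝒳 := fun j => x (Fin.ofNat (n + 1) j)
  have hμ' (z : Fin (n + 1) → K) (y : Fin (n + 1) → 𝒳) : μ z y = joint q1 Q' f' n z y := by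
    have h : μ z y = q1 (z 0) * (∏ i : Fin n, Q i.succ (z i.succ) (z i.castSucc)) *
        ∏ j, f j (y j) (z j) := hμ z y
    simp only [h, joint, Q', f', Fin.ofNat_val_eq_self]
  have hα' (j : Fin (n + 1)) (k : K) : α j k = forward q1 Q' f' x' j k := by
    rw [← forwardMarginal_eq_forward q1 Q' f' (fun _ => hQ_sum _) (fun _ => hf_sum _), hα]
    simp [forwardMarginal, hμ', x']
  change μ z x / _ = (α (Fin.last n) (z (Fin.last n)) / ∑ k, α (Fin.last n) k) *
    ∏ i : Fin n, Q i.succ (z i.succ) (z i.castSucc) * α i.castSucc (z i.castSucc) /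
      ∑ k, Q i.succ (z i.succ) k * α i.castSucc k
  have key := joint_div_sum_joint (Q := Q') (f := f') hq1_nonneg (fun _ => hQ_nonneg _)
    (fun _ => hf_nonneg _) (fun _ => hQ_sum _) (fun _ => hf_sum _) x' z
  have hx' : (fun i : Fin (n + 1) => x' i) = x := funext fun i => by simp [x']
  simpa only [hμ', hα', hx', Q', Fin.ofNat_val_eq_self, Fin.val_last, Fin.val_castSucc] using key
end
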